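/- Let F be the free group on two generators x, y and let R be the normal closure in F of {x², y³, xyxy} (so that F/R ≅ S₃). Then the following congruences hold modulo the subgroup [[R,F],F] of F: (i) [x²,y,y] ≡ [y,x,y]⁻² · [x,y,x,y]; (ii) [y³,x,y] ≡ [y,x,y]³; (iii) [xyxy,x,y] ≡ [y,x,y]² · [y,x,x,y]; (iv) [xyxy,y,y] ≡ [y,x,y]⁻² · [x,y,x,y]. Here a ≡ b modulo [[R,F],F] means a·b⁻¹ ∈ [[R,F],F]. -/

import Mathlib

/-- The commutator `[a,b] = a⁻¹b⁻¹ab` (the convention of the paper); left-normed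
iterated commutators `[a₁,…,a_k]` are obtained by folding `pcomm` from the left. -/
def pcomm {G : Type*} [Group G] (a b : G) : G := a⁻¹ * b⁻¹ * a * b

/-- The free group `F` on the two generators `x`, `y`. -/
abbrev FS3 : Type := FreeGroup Bool

/-- The free generator `x` of `F`. -/
def xF : FS3 := FreeGroup.of true

/-- The free generator `y` of `F`. -/
def yF : FS3 := FreeGroup.of false

/-- `R` is the normal closure in `F` of `{x², y³, xyxy}`, so that `F/R ≅ S₃`. -/
def RS3 : Subgroup FS3 := Subgroup.normalClosure {xF ^ 2, yF ^ 3, xF * yF * xF * yF}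

instance : RS3.Normal := by unfold RS3; infer_instance

open scoped commutatorElement

section AuxLemmas

variable {G : Type*} [Group G] {H : Type*} [Group H]

lemma pcomm_map (f : G →* H) (a b : G) : f (pcomm a b) = pcomm (f a) (f b) := by
  simp [pcomm]

lemma pcomm_eq_commutator (a b : G) : pcomm a b = ⁅a⁻¹, b⁻¹⁆ := by
  simp [pcomm, commutatorElement_def]

lemma pcomm_mem {H' K : Subgroup G} {a b : G} (ha : a ∈ H') (hb : b ∈ K) :
    pcomm a b ∈ ⁅H', K⁆ := by
  rw [pcomm_eq_commutator]
  exact Subgroup.commutator_mem_commutator (inv_mem ha) (inv_mem hb)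

lemma central_inv {z : G} (h : ∀ u : G, z * u = u * z) (u : G) :
    z⁻¹ * u = u * z⁻¹ := by
  calc z⁻¹ * u = z⁻¹ * (u * z) * z⁻¹ := by group
    _ = z⁻¹ * (z * u) * z⁻¹ := by rw [h u]
    _ = u * z⁻¹ := by group

lemma pcomm_eq_one {a g : G} (h : a * g = g * a) : pcomm a g = 1 := by
  have h' : a⁻¹ * g⁻¹ = g⁻¹ * a⁻¹ := by
    rw [← mul_inv_rev, ← mul_inv_rev, h]
  unfold pcomm
  rw [h']
  group

lemma pcomm_mul_left {a b g : G} (h : ∀ u : G, pcomm a g * u = u * pcomm a g) :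
    pcomm (a * b) g = pcomm a g * pcomm b g := by
  have h1 : pcomm (a * b) g = b⁻¹ * (pcomm a g * (g⁻¹ * b * g)) := by
    unfold pcomm; group
  rw [h1, h (g⁻¹ * b * g), h (pcomm b g)]
  unfold pcomm; group

lemma pcomm_mul_right {a g k : G} (h : ∀ u : G, pcomm a g * u = u * pcomm a g) :
    pcomm a (g * k) = pcomm a g * pcomm a k := by
  have h1 : pcomm a (g * k) = (a⁻¹ * k⁻¹ * a) * (pcomm a g * k) := by
    unfold pcomm; group
  rw [h1, h k, h (pcomm a k)]
  unfold pcomm; group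

lemma pcomm_inv_left {a g : G} (h : ∀ u : G, pcomm a g * u = u * pcomm a g) :
    pcomm a⁻¹ g = (pcomm a g)⁻¹ := by
  have h1 : pcomm (a * a⁻¹) g = pcomm a g * pcomm a⁻¹ g := pcomm_mul_left h
  have h2 : pcomm (a * a⁻¹) g = 1 := by
    rw [mul_inv_cancel]
    simp [pcomm]
  rw [h2] at h1
  exact eq_inv_of_mul_eq_one_right h1.symm

lemma pcomm_mul_left_of_comm {a g : G} (h : a * g = g * a) (b : G) :
    pcomm (a * b) g = pcomm b g := by
  have h' : a⁻¹ * g⁻¹ = g⁻¹ * a⁻¹ := by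
    rw [← mul_inv_rev, ← mul_inv_rev, h]
  calc pcomm (a * b) g = b⁻¹ * (a⁻¹ * g⁻¹) * a * (b * g) := by unfold pcomm; group
    _ = b⁻¹ * (g⁻¹ * a⁻¹) * a * (b * g) := by rw [h']
    _ = pcomm b g := by unfold pcomm; group

/-- The core computation, in any group `G` with elements `x`, `y` such that all
commutators of `x·x`, `y·y·y`, `x·y·x·y` with arbitrary elements are central. -/
lemma abstract_52 (x y : G)
    (hs : ∀ g u : G, pcomm (x * x) g * u = u * pcomm (x * x) g)
    (ht : ∀ g u : G, pcomm (y * (y * y)) g * u = u * pcomm (y * (y * y)) g)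
    (hw : ∀ g u : G, pcomm (x * y * x * y) g * u = u * pcomm (x * y * x * y) g) :
    ((pcomm (pcomm y x) y)⁻¹ ^ 2 * pcomm (pcomm (pcomm x y) x) y = 1) ∧
    ((pcomm (pcomm y x) y) ^ 3 = 1) ∧
    ((pcomm (pcomm y x) y) ^ 2 * pcomm (pcomm (pcomm y x) x) y = 1) := by
  -- centrality of `pcomm (x*x)⁻¹ y`
  have hzsi : ∀ u : G, pcomm (x * x)⁻¹ y * u = u * pcomm (x * x)⁻¹ y := by
    intro u
    rw [pcomm_inv_left (hs y)]
    exact central_inv (hs y) u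
  -- centrality of `pcomm (x*y*x*y)⁻¹ y`
  have hzwi : ∀ u : G, pcomm (x * y * x * y)⁻¹ y * u = u * pcomm (x * y * x * y)⁻¹ y := by
    intro u
    rw [pcomm_inv_left (hw y)]
    exact central_inv (hw y) u
  -- centrality of `pcomm (x*x)⁻¹ (y*(y*y))`
  have hzsti : ∀ u : G,
      pcomm (x * x)⁻¹ (y * (y * y)) * u = u * pcomm (x * x)⁻¹ (y * (y * y)) := by
    intro u
    rw [pcomm_inv_left (hs (y * (y * y)))]
    exact central_inv (hs (y * (y * y))) u
  -- the value of `[y,x,y]`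
  have hC1 : pcomm (pcomm y x) y = pcomm (x * x)⁻¹ y * pcomm (x * y * x * y) y := by
    rw [show pcomm y x = y⁻¹ * ((x * x)⁻¹ * ((x * y * x * y) * y⁻¹)) from by
          unfold pcomm; group,
        pcomm_mul_left_of_comm (show y⁻¹ * y = y * y⁻¹ from by group),
        pcomm_mul_left hzsi, pcomm_mul_left (hw y),
        pcomm_eq_one (show y⁻¹ * y = y * y⁻¹ from by group), mul_one]
  -- the value of `[x,y,x,y]`
  have hQ : pcomm (pcomm (pcomm x y) x) y
      = pcomm (x * x)⁻¹ y * (pcomm (x * y * x * y) y *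
          (pcomm (x * x)⁻¹ y * pcomm (x * y * x * y) y)) := by
    rw [show pcomm (pcomm x y) x
        = y⁻¹ * ((x * x)⁻¹ * ((x * y * x * y) * (y⁻¹ * ((x * x)⁻¹ * ((x * y * x * y) *
            (y⁻¹ * ((pcomm (x * y * x * y) x)⁻¹ * y⁻¹))))))) from by
          unfold pcomm; group]
    rw [pcomm_mul_left_of_comm (show y⁻¹ * y = y * y⁻¹ from by group)]
    rw [pcomm_mul_left hzsi]
    rw [pcomm_mul_left (hw y)]
    rw [pcomm_mul_left_of_comm (show y⁻¹ * y = y * y⁻¹ from by group)]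
    rw [pcomm_mul_left hzsi]
    rw [pcomm_mul_left (hw y)]
    rw [pcomm_mul_left_of_comm (show y⁻¹ * y = y * y⁻¹ from by group)]
    rw [pcomm_mul_left_of_comm (central_inv (hw x) y)]
    rw [pcomm_eq_one (show y⁻¹ * y = y * y⁻¹ from by group), mul_one]
  -- the value of `[y,x,x,y]`
  have hR : pcomm (pcomm (pcomm y x) x) y
      = pcomm (x * y * x * y)⁻¹ y * (pcomm (x * x) y *
          (pcomm (x * y * x * y)⁻¹ y * pcomm (x * x) y)) := by
    rw [show pcomm (pcomm y x) x
        = y * ((x * y * x * y)⁻¹ * ((x * x) * (y * (y * (pcomm (x * y * x * y) x *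
            (y * ((x * y * x * y)⁻¹ * (x * x)))))))) from by
          unfold pcomm; group]
    rw [pcomm_mul_left_of_comm (show y * y = y * y from rfl)]
    rw [pcomm_mul_left hzwi]
    rw [pcomm_mul_left (hs y)]
    rw [pcomm_mul_left_of_comm (show y * y = y * y from rfl)]
    rw [pcomm_mul_left_of_comm (show y * y = y * y from rfl)]
    rw [pcomm_mul_left_of_comm (hw x y)]
    rw [pcomm_mul_left_of_comm (show y * y = y * y from rfl)]
    rw [pcomm_mul_left hzwi]
  refine ⟨?_, ?_, ?_⟩
  · rw [hC1, hQ, pow_two]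
    group
  · rw [hC1]
    have hcm : Commute (pcomm (x * x)⁻¹ y) (pcomm (x * y * x * y) y) := hzsi _
    rw [hcm.mul_pow]
    have h3s : (pcomm (x * x)⁻¹ y) ^ 3 = pcomm (x * x)⁻¹ (y * (y * y)) := by
      rw [pcomm_mul_right hzsi, pcomm_mul_right hzsi, pow_succ, pow_two]
      group
    have h3w : (pcomm (x * y * x * y) y) ^ 3 = pcomm (x * y * x * y) (y * (y * y)) := by
      rw [pcomm_mul_right (hw y), pcomm_mul_right (hw y), pow_succ, pow_two]
      group
    rw [h3s, h3w, ← pcomm_mul_left hzsti]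
    apply pcomm_eq_one
    calc (x * x)⁻¹ * (x * y * x * y) * (y * (y * y))
        = x⁻¹ * (y * (x * (y * (y * (y * y))))) := by group
      _ = x⁻¹ * (y * (x * ((y * (y * y)) * y))) := by
          rw [show y * (y * (y * y)) = (y * (y * y)) * y from by group]
      _ = x⁻¹ * (y * ((x * (y * (y * y))) * y)) := by group
      _ = x⁻¹ * (y * (((y * (y * y)) * (pcomm (y * (y * y)) x⁻¹ * x)) * y)) := by
          rw [show x * (y * (y * y)) = (y * (y * y)) * (pcomm (y * (y * y)) x⁻¹ * x) from by
            unfold pcomm; group]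
      _ = x⁻¹ * ((y * (y * (y * y))) * (pcomm (y * (y * y)) x⁻¹ * (x * y))) := by group
      _ = x⁻¹ * (((y * (y * y)) * y) * (pcomm (y * (y * y)) x⁻¹ * (x * y))) := by
          rw [show y * (y * (y * y)) = (y * (y * y)) * y from by group]
      _ = x⁻¹ * ((y * (y * y)) * ((y * pcomm (y * (y * y)) x⁻¹) * (x * y))) := by group
      _ = x⁻¹ * ((y * (y * y)) * ((pcomm (y * (y * y)) x⁻¹ * y) * (x * y))) := by
          rw [← ht x⁻¹ y]
      _ = (x⁻¹ * ((y * (y * y)) * pcomm (y * (y * y)) x⁻¹)) * (y * (x * y)) := by group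
      _ = ((y * (y * y)) * x⁻¹) * (y * (x * y)) := by
          rw [show x⁻¹ * ((y * (y * y)) * pcomm (y * (y * y)) x⁻¹) = (y * (y * y)) * x⁻¹ from by
            unfold pcomm; group]
      _ = (y * (y * y)) * ((x * x)⁻¹ * (x * y * x * y)) := by group
  · rw [hC1, hR, pcomm_inv_left (hs y), pcomm_inv_left (hw y), pow_two]
    group

end AuxLemmas

/-- **Lemma 5.2 (i), (iii), (v), (vii).**  With `F` free on `x, y` and `R` the normal
closure of `{x², y³, xyxy}`, the following congruences hold modulo `[[R,F],F]`
(`a ≡ b` meaning `a·b⁻¹ ∈ [[R,F],F]`):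
(i) `[x²,y,y] ≡ [y,x,y]⁻² · [x,y,x,y]`;
(ii) `[y³,x,y] ≡ [y,x,y]³`;
(iii) `[xyxy,x,y] ≡ [y,x,y]² · [y,x,x,y]`;
(iv) `[xyxy,y,y] ≡ [y,x,y]⁻² · [x,y,x,y]`. -/
theorem lemma_5_2 :
    pcomm (pcomm (xF ^ 2) yF) yF *
        ((pcomm (pcomm yF xF) yF)⁻¹ ^ 2 * pcomm (pcomm (pcomm xF yF) xF) yF)⁻¹ ∈
      ⁅⁅RS3, (⊤ : Subgroup FS3)⁆, (⊤ : Subgroup FS3)⁆ ∧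
    pcomm (pcomm (yF ^ 3) xF) yF * ((pcomm (pcomm yF xF) yF) ^ 3)⁻¹ ∈
      ⁅⁅RS3, (⊤ : Subgroup FS3)⁆, (⊤ : Subgroup FS3)⁆ ∧
    pcomm (pcomm (xF * yF * xF * yF) xF) yF *
        ((pcomm (pcomm yF xF) yF) ^ 2 * pcomm (pcomm (pcomm yF xF) xF) yF)⁻¹ ∈
      ⁅⁅RS3, (⊤ : Subgroup FS3)⁆, (⊤ : Subgroup FS3)⁆ ∧
    pcomm (pcomm (xF * yF * xF * yF) yF) yF *
        ((pcomm (pcomm yF xF) yF)⁻¹ ^ 2 * pcomm (pcomm (pcomm xF yF) xF) yF)⁻¹ ∈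
      ⁅⁅RS3, (⊤ : Subgroup FS3)⁆, (⊤ : Subgroup FS3)⁆ := by
  -- membership of the generating relators in `R`
  have hxR : xF ^ 2 ∈ RS3 := Subgroup.subset_normalClosure (by simp)
  have hyR : yF ^ 3 ∈ RS3 := Subgroup.subset_normalClosure (by simp)
  have hwR : xF * yF * xF * yF ∈ RS3 := Subgroup.subset_normalClosure (by simp)
  set f := QuotientGroup.mk' ⁅⁅RS3, (⊤ : Subgroup FS3)⁆, (⊤ : Subgroup FS3)⁆ with hf
  -- commutators of elements of `R` are central in the quotient
  have cen : ∀ r : FS3, r ∈ RS3 → ∀ g u : FS3 ⧸ ⁅⁅RS3, (⊤ : Subgroup FS3)⁆, (⊤ : Subgroup FS3)⁆,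
      pcomm (f r) g * u = u * pcomm (f r) g := by
    intro r hr g u
    obtain ⟨a, rfl⟩ := QuotientGroup.mk'_surjective _ g
    obtain ⟨b, rfl⟩ := QuotientGroup.mk'_surjective _ u
    rw [← pcomm_map]
    have hm : ⁅pcomm r a, b⁆ ∈ ⁅⁅RS3, (⊤ : Subgroup FS3)⁆, (⊤ : Subgroup FS3)⁆ :=
      Subgroup.commutator_mem_commutator (pcomm_mem hr (Subgroup.mem_top a))
        (Subgroup.mem_top b)
    have h2 : ⁅f (pcomm r a), f b⁆ = 1 := by
      rw [← map_commutatorElement]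
      exact (QuotientGroup.eq_one_iff _).mpr hm
    exact (commutatorElement_eq_one_iff_commute.mp h2).eq
  have hs : ∀ g u, pcomm (f xF * f xF) g * u = u * pcomm (f xF * f xF) g := by
    intro g u
    have e : f (xF ^ 2) = f xF * f xF := by rw [map_pow, pow_two]
    rw [← e]; exact cen (xF ^ 2) hxR g u
  have ht : ∀ g u, pcomm (f yF * (f yF * f yF)) g * u = u * pcomm (f yF * (f yF * f yF)) g := by
    intro g u
    have e : f (yF ^ 3) = f yF * (f yF * f yF) := by
      rw [map_pow, pow_succ, pow_two, mul_assoc]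
    rw [← e]; exact cen (yF ^ 3) hyR g u
  have hw : ∀ g u, pcomm (f xF * f yF * f xF * f yF) g * u
      = u * pcomm (f xF * f yF * f xF * f yF) g := by
    intro g u
    have e : f (xF * yF * xF * yF) = f xF * f yF * f xF * f yF := by simp [map_mul]
    rw [← e]; exact cen (xF * yF * xF * yF) hwR g u
  obtain ⟨hA, hB, hC⟩ := abstract_52 (f xF) (f yF) hs ht hw
  refine ⟨?_, ?_, ?_, ?_⟩
  · refine mul_mem (pcomm_mem (pcomm_mem hxR (Subgroup.mem_top _)) (Subgroup.mem_top _))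
      (inv_mem ((QuotientGroup.eq_one_iff _).mp ?_))
    show f _ = 1
    simp only [map_mul, map_inv, map_pow, pcomm_map]
    exact hA
  · refine mul_mem (pcomm_mem (pcomm_mem hyR (Subgroup.mem_top _)) (Subgroup.mem_top _))
      (inv_mem ((QuotientGroup.eq_one_iff _).mp ?_))
    show f _ = 1
    simp only [map_mul, map_inv, map_pow, pcomm_map]
    exact hB
  · refine mul_mem (pcomm_mem (pcomm_mem hwR (Subgroup.mem_top _)) (Subgroup.mem_top _))
      (inv_mem ((QuotientGroup.eq_one_iff _).mp ?_))
    show f _ = 1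
    simp only [map_mul, map_inv, map_pow, pcomm_map]
    exact hC
  · refine mul_mem (pcomm_mem (pcomm_mem hwR (Subgroup.mem_top _)) (Subgroup.mem_top _))
      (inv_mem ((QuotientGroup.eq_one_iff _).mp ?_))
    show f _ = 1
    simp only [map_mul, map_inv, map_pow, pcomm_map]
    exact hA
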